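/- Let Y, Z1, Z2, Z3, Z4 ∈ ℝ³ and suppose ⟨Y Zi Zj⟩ ≠ 0 for all i ≠ j in {1,2,3,4}. Then ⟨Z1 Z2 Z3⟩²/(⟨Y Z1 Z2⟩·⟨Y Z2 Z3⟩·⟨Y Z3 Z1⟩) + ⟨Z1 Z3 Z4⟩²/(⟨Y Z1 Z3⟩·⟨Y Z3 Z4⟩·⟨Y Z4 Z1⟩) = ⟨Z1 Z2 Z4⟩²/(⟨Y Z1 Z2⟩·⟨Y Z2 Z4⟩·⟨Y Z4 Z1⟩) + ⟨Z2 Z3 Z4⟩²/(⟨Y Z2 Z3⟩·⟨Y Z3 Z4⟩·⟨Y Z4 Z2⟩). -/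

import Mathlib

/-- The 3×3 determinant of the matrix with rows `a`, `b`, `c`. -/
noncomputable def det3 (a b c : Fin 3 → ℝ) : ℝ := Matrix.det (Matrix.of ![a, b, c])

/-!
Clearing denominators turns the identity into a polynomial one. Multiplied by `⟨Y a d⟩` it is a
combination of three instances of Cramer's relation `⟨bcd⟩ a - ⟨acd⟩ b + ⟨abd⟩ c - ⟨abc⟩ d = 0`
among four vectors of `ℝ³`: paired with the linear forms `⟨Y a ·⟩` and `⟨Y d ·⟩`, and, for the
vectors `Y, b, c, d`, paired with `⟨Y a ·⟩`, which is the Plücker relation among the `⟨Y · ·⟩`.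
-/

lemma det3_expand (a b c : Fin 3 → ℝ) :
    det3 a b c = a 0 * (b 1 * c 2 - b 2 * c 1) - a 1 * (b 0 * c 2 - b 2 * c 0)
      + a 2 * (b 0 * c 1 - b 1 * c 0) := by
  simp only [det3, Matrix.det_fin_three, Matrix.of_apply, Matrix.cons_val, Matrix.cons_val_zero,
    Matrix.cons_val_one]
  ring

lemma det3_swap_right (a b c : Fin 3 → ℝ) : det3 a c b = -det3 a b c := by
  simp only [det3_expand]
  ring

lemma det3_same_right (u v : Fin 3 → ℝ) : det3 u v v = 0 := by
  simp only [det3_expand]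
  ring

lemma det3_same_outer (u v : Fin 3 → ℝ) : det3 u v u = 0 := by
  simp only [det3_expand]
  ring

lemma det3_cramer (u v a b c d : Fin 3 → ℝ) :
    det3 b c d * det3 u v a - det3 a c d * det3 u v b + det3 a b d * det3 u v c
      - det3 a b c * det3 u v d = 0 := by
  simp only [det3_expand]
  ring

lemma triangulations_cleared (Y a b c d : Fin 3 → ℝ) (had : det3 Y a d ≠ 0) :
    det3 a b c ^ 2 * det3 Y a d * det3 Y b d * det3 Y c d
        + det3 a c d ^ 2 * det3 Y a b * det3 Y b c * det3 Y b d
      = det3 a b d ^ 2 * det3 Y a c * det3 Y b c * det3 Y c d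
        + det3 b c d ^ 2 * det3 Y a b * det3 Y a c * det3 Y a d := by
  have cramer_a := det3_cramer Y a a b c d
  have cramer_d := det3_cramer Y d a b c d
  have plucker := det3_cramer Y a Y b c d
  rw [det3_same_right] at cramer_a
  rw [det3_same_right, det3_swap_right Y a d, det3_swap_right Y b d,
    det3_swap_right Y c d] at cramer_d
  rw [det3_same_outer] at plucker
  apply mul_left_cancel₀ had
  linear_combination
    -det3 Y b d * det3 Y c d *
        (det3 a b c * det3 Y a d + det3 Y a c * det3 a b d - det3 Y a b * det3 a c d) * cramer_a
      + det3 Y a b * det3 Y a c *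
        (det3 b c d * det3 Y a d + det3 Y b d * det3 a c d - det3 Y c d * det3 a b d) * cramer_d
      - (det3 Y a b * det3 Y b d * det3 a c d ^ 2
        - det3 Y a c * det3 Y c d * det3 a b d ^ 2) * plucker

noncomputable def canonicalFunction (Y a b c : Fin 3 → ℝ) : ℝ :=
  det3 a b c ^ 2 / (det3 Y a b * det3 Y b c * det3 Y c a)

theorem canonicalFunction_diagonal_flip (Y a b c d : Fin 3 → ℝ)
    (hab : det3 Y a b ≠ 0) (hac : det3 Y a c ≠ 0) (had : det3 Y a d ≠ 0)
    (hbc : det3 Y b c ≠ 0) (hbd : det3 Y b d ≠ 0) (hcd : det3 Y c d ≠ 0) :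
    canonicalFunction Y a b c + canonicalFunction Y a c d =
      canonicalFunction Y a b d + canonicalFunction Y b c d := by
  simp only [canonicalFunction, det3_swap_right Y a c, det3_swap_right Y a d,
    det3_swap_right Y b d]
  field_simp
  linear_combination (-1 : ℝ) * triangulations_cleared Y a b c d had

theorem stmt_8 (Y : Fin 3 → ℝ) (Z : Fin 4 → (Fin 3 → ℝ))
    (h : ∀ i j : Fin 4, i ≠ j → det3 Y (Z i) (Z j) ≠ 0) :
    det3 (Z 0) (Z 1) (Z 2) ^ 2 /
        (det3 Y (Z 0) (Z 1) * det3 Y (Z 1) (Z 2) * det3 Y (Z 2) (Z 0)) +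
      det3 (Z 0) (Z 2) (Z 3) ^ 2 /
        (det3 Y (Z 0) (Z 2) * det3 Y (Z 2) (Z 3) * det3 Y (Z 3) (Z 0)) =
    det3 (Z 0) (Z 1) (Z 3) ^ 2 /
        (det3 Y (Z 0) (Z 1) * det3 Y (Z 1) (Z 3) * det3 Y (Z 3) (Z 0)) +
      det3 (Z 1) (Z 2) (Z 3) ^ 2 /
        (det3 Y (Z 1) (Z 2) * det3 Y (Z 2) (Z 3) * det3 Y (Z 3) (Z 1)) :=
  canonicalFunction_diagonal_flip Y (Z 0) (Z 1) (Z 2) (Z 3)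
    (h 0 1 (by decide)) (h 0 2 (by decide)) (h 0 3 (by decide))
    (h 1 2 (by decide)) (h 1 3 (by decide)) (h 2 3 (by decide))
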